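/- arXiv:1512.04521 — 4 statements merged into one kernel-verified Lean document; each statement's English description precedes it below -/
import Mathlib

section
/- For all $\zeta,\beta\in\mathcal B$, define the bounded $\mathbb C$-linear operator $L:\mathcal B\to\mathcal B$ by $L(b)=\overline{\zeta}\,\sigma_1(b)\,\zeta+\overline{\beta}\,b+b\,\beta$. Then for every $t\ge 0$ the operator exponential $\exp(tL)$ (computed in the Banach algebra of bounded linear operators on $\mathcal B$) maps positive elements of $\mathcal B$ to positive elements of $\mathcal B$; that is, if $b\ge 0$ in $\mathcal B$ then $(\exp(tL))(b)\ge 0$. -/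
/- `𝒜` denotes the C*-algebra of bounded continuous functions `[0,∞) → ℂ` (sup norm,
pointwise operations, conjugation as involution), realized as `BoundedContinuousFunction ℝ≥0 ℂ`.
The paper's algebra `ℬ = C₀[0,∞) + ℂ·1` is the set of `f ∈ 𝒜` possessing a limit at
infinity (`memB`), and `C₀[0,∞)` is the set of `f ∈ 𝒜` vanishing at infinity (`memC0`).
Positivity `0 ≤ b` in `ℬ` is the C*-order, i.e. pointwise `0 ≤ b s` in `ℂ`
(with the `ComplexOrder`). -/

open Filter BoundedContinuousFunction NormedSpace
open scoped NNReal ComplexOrder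

noncomputable section

abbrev A : Type := BoundedContinuousFunction ℝ≥0 ℂ

/-- the left shift `σ_t`, `(σ_t f)(s) = f (s + t)`. -/
def sigma (t : ℝ≥0) (f : A) : A :=
  f.compContinuous ⟨fun s => s + t, by continuity⟩

/-- membership in `ℬ = C₀[0,∞) + ℂ·1`: existence of a limit at infinity. -/
def memB (f : A) : Prop := ∃ c : ℂ, Tendsto ⇑f atTop (nhds c)

/-- membership in `C₀[0,∞)`: vanishing at infinity. -/
def memC0 (f : A) : Prop := Tendsto ⇑f atTop (nhds 0)

/-! Put `K = L + 2‖β‖`. Pointwise `(K g)(s) = |ζ s|² g (s + 1) + (2 Re (β s) + 2‖β‖) g s`, so `K`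
maps the closed cone of pointwise nonnegative functions into itself, hence so does every partial
sum of `exp (t K) = ∑ tⁿ Kⁿ / n!` for `t ≥ 0`, and `exp (t L) = e^{-2t‖β‖} exp (t K)`.
Likewise `ℬ` is a closed `*`-subalgebra stable under `σ₁`, hence under `L` and `exp (t L)`. -/

open scoped Nat Topology

theorem Complex.zero_le_star_add_self_add_two_mul {z : ℂ} {r : ℝ} (hz : ‖z‖ ≤ r) :
    0 ≤ star z + z + 2 * r := by
  have hre : 0 ≤ 2 * z.re + 2 * r := by linarith [neg_abs_le z.re, Complex.abs_re_le_norm z]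
  rw [Complex.star_def, add_comm (starRingEnd ℂ z), Complex.add_conj]
  exact_mod_cast Complex.zero_le_real.2 hre

section Exponential

variable {𝔸 : Type*} [NormedRing 𝔸] [NormedAlgebra ℂ 𝔸] [CompleteSpace 𝔸]

theorem exp_add_smul_one (x : 𝔸) (w : ℂ) : exp (x + w • 1) = Complex.exp w • exp x := by
  have hball : ∀ y : 𝔸, y ∈ Metric.eball (0 : 𝔸) (expSeries ℂ 𝔸).radius := fun y =>
    (expSeries_radius_eq_top ℂ 𝔸).symm ▸ edist_lt_top _ _
  rw [exp_add_of_commute_of_mem_ball (𝕂 := ℂ) ((Commute.one_right x).smul_right w) (hball _)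
    (hball _), ← Algebra.algebraMap_eq_smul_one,
    ← algebraMap_exp_comm, Algebra.algebraMap_eq_smul_one, Complex.exp_eq_exp_ℂ, mul_smul_one]

end Exponential

section ExponentialApply

variable {E : Type*} [NormedAddCommGroup E] [NormedSpace ℂ E] [CompleteSpace E]

theorem hasSum_exp_smul_apply (K : E →L[ℂ] E) (t : ℝ) (b : E) :
    HasSum (fun n : ℕ => ((n !⁻¹ : ℝ) * t ^ n) • (K ^ n) b) (exp ((t : ℂ) • K) b) := by
  have h := (NormedSpace.exp_series_hasSum_exp' (𝕂 := ℝ) ((t : ℂ) • K)).mapL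
    (ContinuousLinearMap.apply ℂ E b)
  convert h using 1
  · ext n
    simp [smul_pow, mul_smul, Complex.coe_smul]
  · rfl

namespace PointedCone

theorem exp_smul_apply_mem {C : PointedCone ℝ E} (hC : IsClosed (C : Set E)) {K : E →L[ℂ] E}
    (hK : ∀ x ∈ C, K x ∈ C) {t : ℝ} (ht : 0 ≤ t) {b : E} (hb : b ∈ C) :
    exp ((t : ℂ) • K) b ∈ C := by
  have hpow : ∀ n : ℕ, (K ^ n) b ∈ C := fun n => by
    induction n with
    | zero => simpa using hb
    | succ n ih => rw [pow_succ']; exact hK _ ih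
  rw [← (hasSum_exp_smul_apply K t b).tsum_eq]
  exact tsum_mem hC fun n => C.smul_mem (by positivity) (hpow n)

theorem exp_smul_apply_mem_of_add_smul_one_mem {C : PointedCone ℝ E} (hC : IsClosed (C : Set E))
    {K : E →L[ℂ] E} (c : ℝ) (hK : ∀ x ∈ C, (K + (c : ℂ) • 1) x ∈ C) {t : ℝ} (ht : 0 ≤ t)
    {b : E} (hb : b ∈ C) : exp ((t : ℂ) • K) b ∈ C := by
  have hshift : (t : ℂ) • K = (t : ℂ) • (K + (c : ℂ) • 1) + ((-(t * c) : ℝ) : ℂ) • 1 := by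
    push_cast; module
  rw [hshift, exp_add_smul_one, ← Complex.ofReal_exp, _root_.smul_apply, Complex.coe_smul]
  exact C.smul_mem (Real.exp_pos _).le (exp_smul_apply_mem hC hK ht hb)

end PointedCone

theorem Submodule.exp_apply_mem {S : Submodule ℂ E} (hS : IsClosed (S : Set E)) {K : E →L[ℂ] E}
    (hK : ∀ x ∈ S, K x ∈ S) {b : E} (hb : b ∈ S) : exp K b ∈ S := by
  simpa using PointedCone.exp_smul_apply_mem (C := .ofSubmodule (S.restrictScalars ℝ)) (t := 1)
    hS hK zero_le_one hb

end ExponentialApply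

namespace BoundedContinuousFunction

variable {X : Type*} [TopologicalSpace X]

variable (X) in
def nonnegCone : PointedCone ℝ (X →ᵇ ℂ) where
  carrier := {f | ∀ x, 0 ≤ f x}
  add_mem' hf hg x := add_nonneg (hf x) (hg x)
  zero_mem' _ := le_rfl
  smul_mem' c f hf x := by
    show 0 ≤ ((c : ℝ) • f) x
    simpa only [coe_smul, Pi.smul_apply, Complex.real_smul] using
      mul_nonneg (Complex.zero_le_real.2 c.2) (hf x)

variable (X) in
theorem isClosed_nonnegCone : IsClosed (nonnegCone X : Set (X →ᵇ ℂ)) := by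
  simp only [nonnegCone, Submodule.coe_set_mk, AddSubmonoid.coe_set_mk,
    AddSubsemigroup.coe_set_mk, Set.ofPred_forall]
  exact isClosed_iInter fun x => isClosed_le continuous_const (continuous_eval_const x)

def convergentSubalgebra (l : Filter X) : StarSubalgebra ℂ (X →ᵇ ℂ) where
  carrier := {f | ∃ c, Tendsto f l (𝓝 c)}
  mul_mem' := fun ⟨c, hc⟩ ⟨d, hd⟩ => ⟨c * d, hc.mul hd⟩
  add_mem' := fun ⟨c, hc⟩ ⟨d, hd⟩ => ⟨c + d, hc.add hd⟩
  algebraMap_mem' c := ⟨c, tendsto_const_nhds⟩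
  star_mem' := fun ⟨c, hc⟩ => ⟨star c, hc.star⟩

theorem isClosed_convergentSubalgebra (l : Filter X) [l.NeBot] :
    IsClosed (convergentSubalgebra l : Set (X →ᵇ ℂ)) := by
  refine isClosed_of_closure_subset fun f hf => ?_
  obtain ⟨u, hu, hlim⟩ := mem_closure_iff_seq_limit.1 hf
  have hu' : ∀ n, ∃ c, Tendsto (u n) l (𝓝 c) := hu
  choose c hc using hu'
  have hdist n m : dist (c n) (c m) ≤ dist (u n) (u m) :=
    le_of_tendsto ((hc n).dist (hc m)) (Eventually.of_forall fun x => dist_coe_le_dist x)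
  obtain ⟨b, -, hb, hbl⟩ := cauchySeq_iff_le_tendsto_0.1 hlim.cauchySeq
  obtain ⟨ℓ, hℓ⟩ := cauchySeq_tendsto_of_complete
    (cauchySeq_of_le_tendsto_0 b (fun n m N hn hm => (hdist n m).trans (hb n m N hn hm)) hbl)
  exact ⟨ℓ, (tendsto_iff_tendstoUniformly.1 hlim).tendsto_of_eventually_tendsto
    (Eventually.of_forall hc) hℓ⟩

end BoundedContinuousFunction

theorem memB_sigma {f : A} (hf : memB f) (t : ℝ≥0) : memB (sigma t f) :=
  let ⟨c, hc⟩ := hf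
  ⟨c, hc.comp (tendsto_atTop_mono (fun _ => le_self_add) tendsto_id)⟩

theorem memB_generator {ζ β g : A} (hζ : memB ζ) (hβ : memB β) (hg : memB g) :
    memB (star ζ * sigma 1 g * ζ + star β * g + g * β) := by
  let S := convergentSubalgebra (atTop : Filter ℝ≥0)
  exact S.add_mem (S.add_mem (S.mul_mem (S.mul_mem (star_mem (s := S) hζ) (memB_sigma hg 1)) hζ)
    (S.mul_mem (star_mem (s := S) hβ) hg)) (S.mul_mem hg hβ)

theorem generator_add_smul_nonneg (ζ β : A) {g : A} (hg : ∀ s, 0 ≤ g s) (s : ℝ≥0) :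
    0 ≤ (star ζ * sigma 1 g * ζ + star β * g + g * β + ((2 * ‖β‖ : ℝ) : ℂ) • g) s := by
  have hpointwise : (star ζ * sigma 1 g * ζ + star β * g + g * β + ((2 * ‖β‖ : ℝ) : ℂ) • g) s
      = star (ζ s) * ζ s * g (s + 1) + (star (β s) + β s + 2 * ‖β‖) * g s := by
    simp only [sigma, coe_add, coe_mul, coe_star, coe_smul, coe_compContinuous,
      ContinuousMap.coe_mk, Pi.add_apply, Pi.mul_apply, Pi.star_apply,
      Function.comp_apply]
    push_cast
    ring
  rw [hpointwise]
  exact add_nonneg (mul_nonneg (star_mul_self_nonneg _) (hg _))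
    (mul_nonneg (Complex.zero_le_star_add_self_add_two_mul (norm_coe_le_norm β s)) (hg s))

/-- For `ζ, β ∈ ℬ`, the bounded linear operator
`L(b) = ζ̄ σ₁(b) ζ + β̄ b + b β` on `ℬ` satisfies: for every `t ≥ 0`, the operator
exponential `exp (t L)` maps positive elements of `ℬ` to positive elements of `ℬ`. -/
theorem stmt0 (ζ β : A) (hζ : memB ζ) (hβ : memB β)
    (L : A →L[ℂ] A)
    (hL : ∀ b : A, L b = star ζ * sigma 1 b * ζ + star β * b + b * β)
    (t : ℝ) (ht : 0 ≤ t)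
    (b : A) (hb : memB b) (hbpos : ∀ s : ℝ≥0, 0 ≤ b s) :
    memB (exp ((t : ℂ) • L) b) ∧ ∀ s : ℝ≥0, 0 ≤ (exp ((t : ℂ) • L) b) s := by
  let B : Submodule ℂ A := (convergentSubalgebra atTop).toSubalgebra.toSubmodule
  have hLB : ∀ g ∈ B, ((t : ℂ) • L) g ∈ B := fun g hg =>
    B.smul_mem _ (hL g ▸ memB_generator hζ hβ hg)
  have hLpos : ∀ g ∈ nonnegCone ℝ≥0, (L + ((2 * ‖β‖ : ℝ) : ℂ) • 1) g ∈ nonnegCone ℝ≥0 :=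
    fun g hg s => by simpa [hL] using generator_add_smul_nonneg ζ β hg s
  exact ⟨Submodule.exp_apply_mem (isClosed_convergentSubalgebra atTop) hLB hb,
    PointedCone.exp_smul_apply_mem_of_add_smul_one_mem (isClosed_nonnegCone ℝ≥0) _ hLpos ht hbpos⟩
end
end

section
/- For every $t\ge 0$, every finite family of pairs $(\zeta_1,\beta_1),\dots,(\zeta_k,\beta_k)\in\mathcal B\times\mathcal B$ and all $b_1,\dots,b_k,c_1,\dots,c_k\in\mathcal B$, one has $\sum_{i,j=1}^{k} b_i^*\,\bigl(\exp\bigl(t\,\mathcal L^{(\zeta_i,\beta_i),(\zeta_j,\beta_j)}\bigr)\bigr)(c_i^*\,c_j)\,b_j\ \ge\ 0$ in $\mathcal B$, where $\exp$ is the operator exponential in the Banach algebra of bounded linear operators on $\mathcal B$. (Complete positive definiteness of the CPD-semigroup $\mathcal K_t=e^{t\mathcal L}$ in this example.) -/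
/- `𝒜` denotes the C*-algebra of bounded continuous functions `[0,∞) → ℂ` (sup norm,
pointwise operations, conjugation as involution), realized as `BoundedContinuousFunction ℝ≥0 ℂ`.
The paper's algebra `ℬ = C₀[0,∞) + ℂ·1` is the set of `f ∈ 𝒜` possessing a limit at
infinity (`memB`), and `C₀[0,∞)` is the set of `f ∈ 𝒜` vanishing at infinity (`memC0`).
Positivity `0 ≤ b` in `ℬ` is the C*-order, i.e. pointwise `0 ≤ b s` in `ℂ`
(with the `ComplexOrder`). -/

open Filter BoundedContinuousFunction NormedSpace
open scoped NNReal ComplexOrder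

noncomputable section

/-
The kernel `stepKernel ε : x ↦ (1 + εβ)* (1 + εβ') x + ε ζ* ζ' σ₁(x)` equals `1 + ε𝓛 + ε² β̄β'`,
so it agrees with `exp (ε𝓛)` to second order, and the telescoping estimate
`‖Tⁿ - Rⁿ‖ ≤ n Bⁿ⁻¹ ‖T - R‖` turns this into `exp (t𝓛) = lim (stepKernel (t/n))ⁿ`.
For `ε ≥ 0` the kernel `stepKernel ε` is a positive combination of kernels `x ↦ vᵢ* σ_d(x) vⱼ`,
and this class is stable under composition with `stepKernel ε` because `σ` is a
*-homomorphism and the algebra is commutative. Such kernels are completely positive definite,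
since `∑ bᵢ* vᵢ* σ_d(cᵢ* cⱼ) vⱼ bⱼ = y* y` with `y = ∑ σ_d(cⱼ) vⱼ bⱼ`, and complete positive
definiteness is a closed condition.
-/

open Topology
open scoped Nat

section BanachAlgebra

variable {E : Type*} [NormedRing E] [NormOneClass E]

theorem norm_pow_sub_pow_le {T R : E} {B : ℝ} (hT : ‖T‖ ≤ B) (hR : ‖R‖ ≤ B) (n : ℕ) :
    ‖T ^ n - R ^ n‖ ≤ n * B ^ (n - 1) * ‖T - R‖ := by
  induction n with
  | zero => simp
  | succ n ih =>
    have hsplit : T ^ (n + 1) - R ^ (n + 1) = T ^ n * (T - R) + (T ^ n - R ^ n) * R := by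
      rw [pow_succ, pow_succ]; noncomm_ring
    calc ‖T ^ (n + 1) - R ^ (n + 1)‖
        ≤ B ^ n * ‖T - R‖ + n * B ^ (n - 1) * ‖T - R‖ * B := by
          rw [hsplit]
          refine (norm_add_le _ _).trans (add_le_add ((norm_mul_le _ _).trans ?_)
            ((norm_mul_le _ _).trans ?_))
          · gcongr
            exact (norm_pow_le T n).trans (pow_le_pow_left₀ (norm_nonneg T) hT n)
          · have hB : 0 ≤ B := (norm_nonneg T).trans hT
            gcongr
      _ = (n + 1 : ℕ) * B ^ n * ‖T - R‖ := by
          rcases n with _ | n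
          · simp
          · push_cast; rw [pow_succ]; ring

variable [NormedAlgebra ℝ E] [CompleteSpace E]

theorem norm_exp_sub_sum_range_le (X : E) (k : ℕ) :
    ‖exp X - ∑ i ∈ Finset.range k, (i !⁻¹ : ℝ) • X ^ i‖
      ≤ Real.exp ‖X‖ - ∑ i ∈ Finset.range k, ‖X‖ ^ i / i ! := by
  refine ((hasSum_nat_add_iff' k).2 (exp_series_hasSum_exp' (𝕂 := ℝ) X)).norm_le_of_bounded
    ((hasSum_nat_add_iff' k).2 (Real.exp_eq_exp_ℝ ▸ expSeries_div_hasSum_exp ‖X‖)) fun n => ?_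
  rw [norm_smul, norm_inv, RCLike.norm_natCast, div_eq_inv_mul]
  gcongr
  exact norm_pow_le X _

theorem norm_exp_le (X : E) : ‖exp X‖ ≤ Real.exp ‖X‖ := by
  simpa using norm_exp_sub_sum_range_le X 0

theorem norm_exp_sub_one_sub_le {X : E} (hX : ‖X‖ ≤ 1) : ‖exp X - 1 - X‖ ≤ ‖X‖ ^ 2 := by
  have h := norm_exp_sub_sum_range_le X 2
  norm_num [Finset.sum_range_succ, ← sub_sub] at h
  have hreal := Real.norm_exp_sub_one_sub_id_le (x := ‖X‖) (by rwa [norm_norm])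
  rw [norm_norm] at hreal
  exact h.trans ((Real.le_norm_self _).trans hreal)

theorem norm_le_exp_add_norm_sub_exp (T X : E) : ‖T‖ ≤ Real.exp (‖X‖ + ‖T - exp X‖) :=
  calc ‖T‖ ≤ ‖exp X‖ + ‖T - exp X‖ := norm_le_norm_add_norm_sub' _ _
    _ ≤ Real.exp ‖X‖ + ‖T - exp X‖ := by grw [norm_exp_le]
    _ ≤ Real.exp ‖X‖ * Real.exp ‖T - exp X‖ := by
        nlinarith [mul_le_mul_of_nonneg_left (Real.add_one_le_exp ‖T - exp X‖)
          (Real.exp_pos ‖X‖).le, mul_le_mul_of_nonneg_right (Real.one_le_exp (norm_nonneg X))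
          (norm_nonneg (T - exp X))]
    _ = Real.exp (‖X‖ + ‖T - exp X‖) := (Real.exp_add _ _).symm

theorem tendsto_pow_of_norm_sub_one_add_le {T : ℕ → E} {X : E} {C : ℝ}
    (hT : ∀ᶠ n in atTop, ‖T n - (1 + (n : ℝ)⁻¹ • X)‖ ≤ C / n ^ 2) :
    Tendsto (fun n => T n ^ n) atTop (𝓝 (exp X)) := by
  set D := C + ‖X‖ ^ 2
  have hbound : Tendsto (fun n : ℕ => Real.exp (‖X‖ + D / n) * (D / n)) atTop (𝓝 0) := by
    have h := tendsto_const_div_atTop_nhds_zero_nat D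
    simpa using ((tendsto_const_nhds.add h).rexp).mul h
  rw [tendsto_iff_norm_sub_tendsto_zero]
  refine squeeze_zero' (Eventually.of_forall fun n => norm_nonneg _) ?_ hbound
  filter_upwards [hT, eventually_ge_atTop 1, eventually_ge_atTop ⌈‖X‖⌉₊] with n hTn hn hnX
  have hn0 : (0 : ℝ) < n := by exact_mod_cast hn
  set Y := (n : ℝ)⁻¹ • X
  have hY : ‖Y‖ = ‖X‖ / n := by
    rw [norm_smul, norm_inv, RCLike.norm_natCast, inv_mul_eq_div]
  have hpow : exp Y ^ n = exp X := by
    let : NormedAlgebra ℚ E := .restrictScalars ℚ ℝ E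
    rw [← exp_nsmul, ← Nat.cast_smul_eq_nsmul ℝ, smul_smul, mul_inv_cancel₀ hn0.ne', one_smul]
  have hTY : ‖T n - exp Y‖ ≤ D / n ^ 2 :=
    calc ‖T n - exp Y‖ = ‖(T n - (1 + Y)) - (exp Y - 1 - Y)‖ := by congr 1; abel
      _ ≤ C / n ^ 2 + ‖Y‖ ^ 2 := by
          refine (norm_sub_le _ _).trans (add_le_add hTn (norm_exp_sub_one_sub_le ?_))
          rw [hY, div_le_one hn0]
          exact Nat.ceil_le.1 hnX
      _ = D / n ^ 2 := by rw [hY]; ring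
  set B := Real.exp ((‖X‖ + D / n) / n)
  have hB : Real.exp (‖Y‖ + ‖T n - exp Y‖) ≤ B := by
    rw [Real.exp_le_exp, hY]
    calc ‖X‖ / n + ‖T n - exp Y‖ ≤ ‖X‖ / n + D / n ^ 2 := by gcongr
      _ = (‖X‖ + D / n) / n := by field_simp
  have hB1 : 1 ≤ B := (Real.one_le_exp (by positivity)).trans hB
  have hexpY : ‖exp Y‖ ≤ B :=
    (norm_exp_le Y).trans ((Real.exp_le_exp.2 (le_add_of_nonneg_right (norm_nonneg _))).trans hB)
  rw [← hpow]
  calc ‖T n ^ n - exp Y ^ n‖ ≤ n * B ^ (n - 1) * ‖T n - exp Y‖ :=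
        norm_pow_sub_pow_le ((norm_le_exp_add_norm_sub_exp _ _).trans hB) hexpY n
    _ ≤ n * B ^ n * (D / n ^ 2) := by gcongr; exact Nat.sub_le n 1
    _ = Real.exp (‖X‖ + D / n) * (D / n) := by rw [← Real.exp_nat_mul]; field_simp

end BanachAlgebra

instance : Nontrivial A :=
  ⟨0, 1, fun h => zero_ne_one (α := ℂ) (DFunLike.congr_fun h 0)⟩

@[simp] theorem sigma_apply (t : ℝ≥0) (f : A) (s : ℝ≥0) : sigma t f s = f (s + t) := rfl

theorem sigma_zero (f : A) : sigma 0 f = f := by ext s; simp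

theorem sigma_mul (t : ℝ≥0) (f g : A) : sigma t (f * g) = sigma t f * sigma t g := rfl

theorem sigma_star (t : ℝ≥0) (f : A) : sigma t (star f) = star (sigma t f) := rfl

theorem sigma_sigma (t u : ℝ≥0) (f : A) : sigma t (sigma u f) = sigma (u + t) f := by
  ext s; simp [add_assoc, add_comm t]

def shift : A →L[ℂ] A :=
  LinearMap.mkContinuous
    { toFun := sigma 1
      map_add' := fun _ _ => rfl
      map_smul' := fun _ _ => rfl } 1
    fun f => by rw [one_mul]; exact f.norm_compContinuous_le _

theorem shift_apply (f : A) : shift f = sigma 1 f := rfl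

def stepKernel (ε : ℝ) (ζ β ζ' β' : A) : A →L[ℂ] A :=
  ContinuousLinearMap.mul ℂ A (star (1 + ε • β) * (1 + ε • β'))
    + ε • (ContinuousLinearMap.mul ℂ A (star ζ * ζ') ∘L shift)

theorem stepKernel_apply (ε : ℝ) (ζ β ζ' β' x : A) :
    stepKernel ε ζ β ζ' β' x
      = star (1 + ε • β) * (1 + ε • β') * x + ε • (star ζ * ζ' * sigma 1 x) := rfl

theorem stepKernel_eq {ε : ℝ} {ζ β ζ' β' : A} {L : A →L[ℂ] A}
    (hL : ∀ x, L x = star ζ * sigma 1 x * ζ' + star β * x + x * β') :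
    stepKernel ε ζ β ζ' β'
      = 1 + (ε : ℂ) • L + ((ε : ℂ) ^ 2) • ContinuousLinearMap.mul ℂ A (star β * β') := by
  ext1 x
  simp only [stepKernel_apply, _root_.add_apply, one_apply_eq_self, _root_.smul_apply,
    ContinuousLinearMap.mul_apply', hL, star_add, star_one, star_smul, star_trivial]
  simp only [Algebra.smul_def, IsScalarTower.algebraMap_apply ℝ ℂ A, Complex.coe_algebraMap,
    map_pow]
  ring

section Kernels

variable {ι : Type*}

def IsShiftGram (K : ι → ι → (A →L[ℂ] A)) : Prop :=
  ∃ (α : Type) (_ : Fintype α) (w : α → ℝ) (d : α → ℝ≥0) (V : ι → α → A),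
    (∀ a, 0 ≤ w a) ∧ ∀ i j x, K i j x = ∑ a, w a • (star (V i a) * sigma (d a) x * V j a)

def IsCompletelyPosDef [Fintype ι] (K : ι → ι → (A →L[ℂ] A)) : Prop :=
  ∀ (b c : ι → A) (s : ℝ≥0), 0 ≤ (∑ i, ∑ j, star (b i) * K i j (star (c i) * c j) * b j) s

theorem isShiftGram_one : IsShiftGram fun _ _ : ι => (1 : A →L[ℂ] A) :=
  ⟨Unit, inferInstance, fun _ => 1, fun _ => 0, fun _ _ => 1, fun _ => zero_le_one,
    fun _ _ x => by simp [sigma_zero]⟩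

theorem IsShiftGram.stepKernel_comp {K : ι → ι → (A →L[ℂ] A)} (hK : IsShiftGram K) {ε : ℝ}
    (hε : 0 ≤ ε) (ζ β : ι → A) :
    IsShiftGram fun i j => stepKernel ε (ζ i) (β i) (ζ j) (β j) ∘L K i j := by
  obtain ⟨α, _, w, d, V, hw, hKV⟩ := hK
  refine ⟨α ⊕ α, inferInstance, Sum.elim w (ε * w ·), Sum.elim d (d · + 1),
    fun i => Sum.elim ((1 + ε • β i) * V i ·) fun a => ζ i * sigma 1 (V i a), ?_, fun i j x => ?_⟩
  · rintro (a | a)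
    exacts [hw a, mul_nonneg hε (hw a)]
  have hshift : sigma 1 (K i j x)
      = ∑ a, w a • (star (sigma 1 (V i a)) * sigma (d a + 1) x * sigma 1 (V j a)) := by
    rw [hKV, ← shift_apply, map_sum]
    refine Finset.sum_congr rfl fun a _ => ?_
    rw [ContinuousLinearMap.map_smul_of_tower, shift_apply, sigma_mul, sigma_mul, sigma_star,
      sigma_sigma]
  rw [ContinuousLinearMap.comp_apply, stepKernel_apply, hshift, hKV, Fintype.sum_sum_type,
    Finset.mul_sum, Finset.mul_sum, Finset.smul_sum]
  congr 1 <;> refine Finset.sum_congr rfl fun a _ => ?_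
  · simp only [Sum.elim_inl, star_mul, mul_smul_comm]
    ring_nf
  · simp only [Sum.elim_inr, star_mul, mul_smul_comm, smul_smul]
    ring_nf

theorem isShiftGram_stepKernel_pow {ε : ℝ} (hε : 0 ≤ ε) (ζ β : ι → A) (n : ℕ) :
    IsShiftGram fun i j => stepKernel ε (ζ i) (β i) (ζ j) (β j) ^ n := by
  induction n with
  | zero => simpa using isShiftGram_one
  | succ n ih => simpa only [pow_succ', ContinuousLinearMap.mul_def] using ih.stepKernel_comp hε ζ β

theorem IsShiftGram.isCompletelyPosDef [Fintype ι] {K : ι → ι → (A →L[ℂ] A)}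
    (hK : IsShiftGram K) : IsCompletelyPosDef K := by
  obtain ⟨α, _, w, d, V, hw, hKV⟩ := hK
  intro b c s
  set y : α → A := fun a => ∑ j, sigma (d a) (c j) * V j a * b j
  have hgram : ∑ i, ∑ j, star (b i) * K i j (star (c i) * c j) * b j
      = ∑ a, w a • (star (y a) * y a) := by
    simp only [hKV, Finset.mul_sum, Finset.sum_mul]
    rw [Finset.sum_comm_cycle]
    refine Finset.sum_congr rfl fun a _ => ?_
    simp only [y, star_sum, Finset.sum_mul_sum, Finset.smul_sum]
    refine Finset.sum_congr rfl fun i _ => Finset.sum_congr rfl fun j _ => ?_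
    rw [sigma_mul, sigma_star, mul_smul_comm, smul_mul_assoc]
    simp only [star_mul]
    ring_nf
  rw [hgram, BoundedContinuousFunction.sum_apply]
  refine Finset.sum_nonneg fun a _ => ?_
  rw [BoundedContinuousFunction.smul_apply, mul_apply, star_apply, Complex.real_smul]
  exact mul_nonneg (by exact_mod_cast hw a) (star_mul_self_nonneg _)

theorem IsCompletelyPosDef.of_tendsto [Fintype ι] {K : ℕ → ι → ι → (A →L[ℂ] A)}
    {K₀ : ι → ι → (A →L[ℂ] A)} (hK : ∀ i j, Tendsto (K · i j) atTop (𝓝 (K₀ i j)))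
    (hpos : ∀ n, IsCompletelyPosDef (K n)) : IsCompletelyPosDef K₀ := by
  intro b c s
  have hcont : Continuous fun K : ι → ι → (A →L[ℂ] A) =>
      (∑ i, ∑ j, star (b i) * K i j (star (c i) * c j) * b j) s := by
    fun_prop
  have hKK₀ : Tendsto K atTop (𝓝 K₀) := tendsto_pi_nhds.2 fun i => tendsto_pi_nhds.2 (hK i)
  exact ge_of_tendsto' ((hcont.tendsto K₀).comp hKK₀) fun n => hpos n b c s

end Kernels

theorem tendsto_stepKernel_pow {ζ β ζ' β' : A} {L : A →L[ℂ] A}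
    (hL : ∀ x, L x = star ζ * sigma 1 x * ζ' + star β * x + x * β') (t : ℝ) :
    Tendsto (fun n : ℕ => stepKernel (t / n) ζ β ζ' β' ^ n) atTop (𝓝 (exp ((t : ℂ) • L))) := by
  set M := ContinuousLinearMap.mul ℂ A (star β * β')
  refine tendsto_pow_of_norm_sub_one_add_le (E := A →L[ℂ] A) (C := t ^ 2 * ‖M‖)
    (Eventually.of_forall fun n => ?_)
  have hstep : stepKernel (t / n) ζ β ζ' β' - (1 + (n : ℝ)⁻¹ • (t : ℂ) • L)
      = (((t / n : ℝ) : ℂ) ^ 2) • M := by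
    rw [stepKernel_eq hL, ← smul_assoc, Complex.real_smul]
    push_cast
    rw [inv_mul_eq_div]
    abel
  rw [hstep, norm_smul, norm_pow, Complex.norm_real, Real.norm_eq_abs, sq_abs, div_pow]
  exact (div_mul_eq_mul_div _ _ _).le

theorem stmt1_general (t : ℝ) (ht : 0 ≤ t) (k : ℕ) (ζ β b c : Fin k → A)
    (L : Fin k → Fin k → (A →L[ℂ] A))
    (hL : ∀ i j (x : A), L i j x = star (ζ i) * sigma 1 x * ζ j + star (β i) * x + x * β j) :
    ∀ s : ℝ≥0,
      0 ≤ (∑ i, ∑ j, star (b i) * (exp ((t : ℂ) • L i j) (star (c i) * c j)) * b j) s :=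
  IsCompletelyPosDef.of_tendsto (fun i j => tendsto_stepKernel_pow (hL i j) t)
    (fun n => (isShiftGram_stepKernel_pow (by positivity) ζ β n).isCompletelyPosDef) b c

/-- complete positive definiteness of the CPD-semigroup `𝒦_t = e^{t𝓛}`:
for every `t ≥ 0`, all pairs `(ζᵢ, βᵢ) ∈ ℬ × ℬ` and all `bᵢ, cᵢ ∈ ℬ`,
`∑_{i,j} bᵢ* (exp (t 𝓛^{(ζᵢ,βᵢ),(ζⱼ,βⱼ)}))(cᵢ* cⱼ) bⱼ ≥ 0` in `ℬ`, where
`𝓛^{(ζ,β),(ζ',β')}(b) = ζ̄ σ₁(b) ζ' + β̄ b + b β'`. -/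
theorem stmt1 (t : ℝ) (ht : 0 ≤ t) (k : ℕ) (ζ β b c : Fin k → A)
    (hζ : ∀ i, memB (ζ i)) (hβ : ∀ i, memB (β i))
    (hb : ∀ i, memB (b i)) (hc : ∀ i, memB (c i))
    (L : Fin k → Fin k → (A →L[ℂ] A))
    (hL : ∀ i j (x : A), L i j x = star (ζ i) * sigma 1 x * ζ j + star (β i) * x + x * β j) :
    ∀ s : ℝ≥0,
      0 ≤ (∑ i, ∑ j, star (b i) * (exp ((t : ℂ) • L i j) (star (c i) * c j)) * b j) s :=
  stmt1_general t ht k ζ β b c L hL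
end
end

section
/- For every finite family of pairs $(\zeta_1,\beta_1),\dots,(\zeta_k,\beta_k)\in\mathcal B\times\mathcal B$ and all $b_1,\dots,b_k,c_1,\dots,c_k\in\mathcal B$ satisfying $\sum_{i=1}^{k} c_i b_i=0$, one has $\sum_{i,j=1}^{k} b_i^*\,\mathcal L^{(\zeta_i,\beta_i),(\zeta_j,\beta_j)}(c_i^*\,c_j)\,b_j\ \ge\ 0$ in $\mathcal B$; indeed this sum equals $\bigl(\sum_{j=1}^{k}\sigma_1(c_j)\,\zeta_j\,b_j\bigr)^*\bigl(\sum_{j=1}^{k}\sigma_1(c_j)\,\zeta_j\,b_j\bigr)$. (Conditional complete positive definiteness of the generator kernel $\mathcal L$ in this example.) -/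
/- `𝒜` denotes the C*-algebra of bounded continuous functions `[0,∞) → ℂ` (sup norm,
pointwise operations, conjugation as involution), realized as `BoundedContinuousFunction ℝ≥0 ℂ`.
The paper's algebra `ℬ = C₀[0,∞) + ℂ·1` is the set of `f ∈ 𝒜` possessing a limit at
infinity (`memB`), and `C₀[0,∞)` is the set of `f ∈ 𝒜` vanishing at infinity (`memC0`).
Positivity `0 ≤ b` in `ℬ` is the C*-order, i.e. pointwise `0 ≤ b s` in `ℂ`
(with the `ComplexOrder`). -/

open Filter BoundedContinuousFunction NormedSpace
open scoped NNReal ComplexOrder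

noncomputable section

/-! The generator kernel splits into a "ζ-part" `star (σ₁ cᵢ ζᵢ bᵢ) (σ₁ cⱼ ζⱼ bⱼ)`, which sums
to a square, and two "β-parts", each of which factors through `∑ᵢ cᵢ bᵢ` by commutativity and
therefore vanishes. -/

section GeneratorKernel

variable {R F ι : Type*} [CommRing R] [StarRing R] [FunLike F R R] [MulHomClass F R R]
  [StarHomClass F R R]

theorem generatorKernel_term_eq (σ : F) (ζi ζj βi βj bi bj ci cj : R) :
    star bi * (star ζi * σ (star ci * cj) * ζj + star βi * (star ci * cj)
        + star ci * cj * βj) * bj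
      = star (σ ci * ζi * bi) * (σ cj * ζj * bj) + star (ci * (βi * bi)) * (cj * bj)
        + star (ci * bi) * (cj * (βj * bj)) := by
  simp only [map_mul, map_star, star_mul]
  ring

theorem sum_generatorKernel_eq_star_mul_self (σ : F) (s : Finset ι) (ζ β b c : ι → R)
    (hsum : ∑ i ∈ s, c i * b i = 0) :
    ∑ i ∈ s, ∑ j ∈ s, star (b i) *
        (star (ζ i) * σ (star (c i) * c j) * ζ j
          + star (β i) * (star (c i) * c j) + star (c i) * c j * β j) * b j
      = star (∑ j ∈ s, σ (c j) * ζ j * b j) * ∑ j ∈ s, σ (c j) * ζ j * b j := by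
  simp only [generatorKernel_term_eq, Finset.sum_add_distrib, ← Finset.sum_mul_sum,
    ← star_sum, hsum, star_zero, mul_zero, zero_mul, add_zero]

end GeneratorKernel

def sigmaStarMonoidHom (t : ℝ≥0) : A →⋆* A where
  toFun := sigma t
  map_one' := rfl
  map_mul' _ _ := rfl
  map_star' _ := rfl

theorem sigmaStarMonoidHom_apply (t : ℝ≥0) (f : A) : sigmaStarMonoidHom t f = sigma t f := rfl

theorem stmt2_general (k : ℕ) (ζ β b c : Fin k → A)
    (hsum : ∑ i, c i * b i = 0) :
    (∑ i, ∑ j, star (b i) *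
        (star (ζ i) * sigma 1 (star (c i) * c j) * ζ j
          + star (β i) * (star (c i) * c j) + (star (c i) * c j) * β j) * b j)
      = star (∑ j, sigma 1 (c j) * ζ j * b j) * (∑ j, sigma 1 (c j) * ζ j * b j)
    ∧ ∀ s : ℝ≥0,
        0 ≤ (∑ i, ∑ j, star (b i) *
          (star (ζ i) * sigma 1 (star (c i) * c j) * ζ j
            + star (β i) * (star (c i) * c j) + (star (c i) * c j) * β j) * b j) s := by
  have key := sum_generatorKernel_eq_star_mul_self (sigmaStarMonoidHom 1) Finset.univ ζ β b c hsum
  simp only [sigmaStarMonoidHom_apply] at key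
  refine ⟨key, fun s => ?_⟩
  rw [key]
  exact star_mul_self_nonneg _

/-- conditional complete positive definiteness of the generator kernel
`𝓛^{(ζ,β),(ζ',β')}(b) = ζ̄ σ₁(b) ζ' + β̄ b + b β'`: if `∑ᵢ cᵢ bᵢ = 0` then
`∑_{i,j} bᵢ* 𝓛^{(ζᵢ,βᵢ),(ζⱼ,βⱼ)}(cᵢ* cⱼ) bⱼ = (∑ⱼ σ₁(cⱼ) ζⱼ bⱼ)* (∑ⱼ σ₁(cⱼ) ζⱼ bⱼ) ≥ 0`. -/
theorem stmt2 (k : ℕ) (ζ β b c : Fin k → A)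
    (hζ : ∀ i, memB (ζ i)) (hβ : ∀ i, memB (β i))
    (hb : ∀ i, memB (b i)) (hc : ∀ i, memB (c i))
    (hsum : ∑ i, c i * b i = 0) :
    (∑ i, ∑ j, star (b i) *
        (star (ζ i) * sigma 1 (star (c i) * c j) * ζ j
          + star (β i) * (star (c i) * c j) + (star (c i) * c j) * β j) * b j)
      = star (∑ j, sigma 1 (c j) * ζ j * b j) * (∑ j, sigma 1 (c j) * ζ j * b j)
    ∧ ∀ s : ℝ≥0,
        0 ≤ (∑ i, ∑ j, star (b i) *
          (star (ζ i) * sigma 1 (star (c i) * c j) * ζ j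
            + star (β i) * (star (c i) * c j) + (star (c i) * c j) * β j) * b j) s :=
  stmt2_general k ζ β b c hsum
end
end

section
/- There is no function $g\in C_0[0,+\infty)$ such that $\sup_{s\ge 0}|g(s)\,b(s)|=\sup_{s\ge 0}|b(s)|$ for every $b\in\mathcal B$ (in particular, there is no $g\in C_0[0,+\infty)$ with $\overline{g}\,g=1$, i.e. with $|g(s)|=1$ for all $s$). Consequently, there is no isometric $\mathcal B$-linear bijection from $\mathcal B$ onto $C_0[0,+\infty)$, where both are regarded as normed $\mathcal B$-modules via pointwise multiplication with the supremum norm. (This shows that the index of the product subsystem $E$, which is isomorphic to $C_0[0,+\infty)$, differs from the index $\mathcal B$ of the containing time ordered Fock system.) -/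
/- `𝒜` denotes the C*-algebra of bounded continuous functions `[0,∞) → ℂ` (sup norm,
pointwise operations, conjugation as involution), realized as `BoundedContinuousFunction ℝ≥0 ℂ`.
The paper's algebra `ℬ = C₀[0,∞) + ℂ·1` is the set of `f ∈ 𝒜` possessing a limit at
infinity (`memB`), and `C₀[0,∞)` is the set of `f ∈ 𝒜` vanishing at infinity (`memC0`).
Positivity `0 ≤ b` in `ℬ` is the C*-order, i.e. pointwise `0 ≤ b s` in `ℂ`
(with the `ComplexOrder`). -/

open Filter BoundedContinuousFunction NormedSpace
open scoped NNReal ComplexOrder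

noncomputable section

/-! A function `g` vanishing at infinity has `‖g s‖ ≤ 1/2` beyond some `T`, so for the
ramp `b = min (s - T) 1`, which lies in `ℬ`, vanishes on `[0, T]` and has norm one,
`‖g b‖ ≤ 1/2 < ‖b‖`.
The other claims reduce to this: `ḡ g = 1` forces `|g| ≡ 1`, which makes multiplication by `g`
isometric, and a `ℬ`-linear isometry `Φ` is multiplication by `Φ 1 ∈ C₀[0,∞)`. -/

theorem BoundedContinuousFunction.norm_mul_eq_of_norm_apply_eq_one {α R : Type*}
    [TopologicalSpace α] [NormedDivisionRing R] {g : α →ᵇ R} (hg : ∀ s, ‖g s‖ = 1)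
    (b : α →ᵇ R) : ‖g * b‖ = ‖b‖ := by
  simp only [norm_eq_iSup_norm, coe_mul, Pi.mul_apply, norm_mul, hg, one_mul]

theorem BoundedContinuousFunction.norm_apply_eq_one_of_star_mul_self_eq_one {α R : Type*}
    [TopologicalSpace α] [NormedRing R] [StarRing R] [CStarRing R] [NormOneClass R]
    {g : α →ᵇ R} (hg : star g * g = 1) (s : α) : ‖g s‖ = 1 := by
  have h : ‖g s‖ ^ 2 = 1 := by
    simpa [sq, CStarRing.norm_star_mul_self] using congrArg (fun f : α →ᵇ R => ‖f s‖) hg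
  exact (pow_eq_one_iff_of_nonneg (norm_nonneg _) two_ne_zero).1 h

lemma memB_one : memB 1 := ⟨1, tendsto_const_nhds⟩

def ramp (T : ℝ≥0) : A :=
  ofNormedAddCommGroup (fun s => ((min (s - T) 1 : ℝ≥0) : ℝ)) (by fun_prop) 1 fun s => by
    rw [Complex.norm_real, Real.norm_of_nonneg (NNReal.coe_nonneg _)]
    exact_mod_cast min_le_right (s - T) 1

lemma norm_ramp_apply_le (T s : ℝ≥0) : ‖ramp T s‖ ≤ 1 :=
  (norm_le zero_le_one).1 (norm_ofNormedAddCommGroup_le _ zero_le_one _) s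

lemma ramp_apply_of_le {T s : ℝ≥0} (hs : s ≤ T) : ramp T s = 0 := by
  simp [ramp, tsub_eq_zero_of_le hs]

lemma ramp_apply_of_add_le {T s : ℝ≥0} (hs : T + 1 ≤ s) : ramp T s = 1 := by
  simp [ramp, le_tsub_of_add_le_left hs]

lemma memB_ramp (T : ℝ≥0) : memB (ramp T) :=
  ⟨1, tendsto_const_nhds.congr' <| (eventually_ge_atTop (T + 1)).mono
    fun _ hs => (ramp_apply_of_add_le hs).symm⟩

lemma norm_ramp (T : ℝ≥0) : ‖ramp T‖ = 1 := by
  refine le_antisymm ((norm_le zero_le_one).2 (norm_ramp_apply_le T)) ?_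
  simpa [ramp_apply_of_add_le le_rfl] using (ramp T).norm_coe_le_norm (T + 1)

lemma norm_mul_ramp_le {g : A} {T : ℝ≥0} {ε : ℝ} (hε : 0 ≤ ε)
    (hg : ∀ s ≥ T, ‖g s‖ ≤ ε) :
    ‖g * ramp T‖ ≤ ε := by
  refine (norm_le hε).2 fun s => ?_
  rw [coe_mul, Pi.mul_apply, norm_mul]
  rcases le_total s T with hs | hs
  · simpa [ramp_apply_of_le hs] using hε
  · simpa using mul_le_mul (hg s hs) (norm_ramp_apply_le T s) (norm_nonneg _) hε

lemma exists_memB_norm_mul_lt {g : A} (hg : memC0 g) : ∃ b, memB b ∧ ‖g * b‖ < ‖b‖ := by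
  obtain ⟨T, hT⟩ := eventually_atTop.1 <|
    (tendsto_zero_iff_norm_tendsto_zero.1 hg).eventually (ge_mem_nhds one_half_pos)
  refine ⟨ramp T, memB_ramp T, ?_⟩
  calc ‖g * ramp T‖ ≤ 1 / 2 := norm_mul_ramp_le one_half_pos.le (by simpa using hT)
    _ < ‖ramp T‖ := by rw [norm_ramp]; norm_num

lemma not_exists_memC0_norm_mul_eq_norm :
    ¬ ∃ g : A, memC0 g ∧ ∀ b : A, memB b → ‖g * b‖ = ‖b‖ := by
  rintro ⟨g, hg, hiso⟩
  obtain ⟨b, hb, hlt⟩ := exists_memB_norm_mul_lt hg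
  exact hlt.ne (hiso b hb)

lemma not_exists_memC0_norm_apply_eq_one :
    ¬ ∃ g : A, memC0 g ∧ ∀ s : ℝ≥0, ‖g s‖ = 1 :=
  fun ⟨g, hg, hnorm⟩ => not_exists_memC0_norm_mul_eq_norm
    ⟨g, hg, fun b _ => norm_mul_eq_of_norm_apply_eq_one hnorm b⟩

/-- there is no `g ∈ C₀[0,∞)` with `‖g b‖ = ‖b‖` for every `b ∈ ℬ`
(in particular none with `ḡ g = 1`); consequently there is no isometric `ℬ`-linear
bijection from `ℬ` onto `C₀[0,∞)` (both regarded as normed `ℬ`-modules via pointwise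
multiplication, with the supremum norm). Hence `ind E ≅ C₀[0,∞)` differs from the
index `ℬ` of the containing time ordered Fock system. -/
theorem stmt4 :
    (¬ ∃ g : A, memC0 g ∧ ∀ b : A, memB b → ‖g * b‖ = ‖b‖)
    ∧ (¬ ∃ g : A, memC0 g ∧ star g * g = 1)
    ∧ (¬ ∃ g : A, memC0 g ∧ ∀ s : ℝ≥0, ‖g s‖ = 1)
    ∧ (¬ ∃ Φ : A → A,
        (∀ f, memB f → memC0 (Φ f)) ∧
        (∀ h, memC0 h → ∃ f, memB f ∧ Φ f = h) ∧
        (∀ f g, memB f → memB g → Φ f = Φ g → f = g) ∧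
        (∀ f g, memB f → memB g → Φ (f + g) = Φ f + Φ g) ∧
        (∀ b f, memB b → memB f → Φ (b * f) = b * Φ f) ∧
        (∀ f, memB f → ‖Φ f‖ = ‖f‖)) := by
  refine ⟨not_exists_memC0_norm_mul_eq_norm, ?_, not_exists_memC0_norm_apply_eq_one, ?_⟩
  · rintro ⟨g, hg, hgg⟩
    exact not_exists_memC0_norm_apply_eq_one
      ⟨g, hg, norm_apply_eq_one_of_star_mul_self_eq_one hgg⟩
  · rintro ⟨Φ, hΦC0, -, -, -, hΦmul, hΦnorm⟩
    refine not_exists_memC0_norm_mul_eq_norm ⟨Φ 1, hΦC0 1 memB_one, fun b hb => ?_⟩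
    have hΦb : Φ b = b * Φ 1 := by simpa using hΦmul b 1 hb memB_one
    rw [mul_comm, ← hΦb, hΦnorm b hb]
end
end
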